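/- arXiv:2512.16186 — 2 statements merged into one kernel-verified Lean document; each statement's English description precedes it below -/
import Mathlib

section
/- Let w be a word of length k over an alphabet Σ with autocorrelation b_k, b_{k-1}, …, b_1, and suppose there exists an index 1 ≤ i ≤ k−1 with b_i = 1; let i_m = max{ i : b_i = 1, 1 ≤ i ≤ k−1 }. Then: (a) for every 1 ≤ i ≤ k−1 with b_i = 1, either i < k − i_m or i = k − m·(k − i_m) for some positive integer m; and (b) conversely, if 1 ≤ i ≤ k−1 and i = k − m·(k − i_m) for some positive integer m, then b_i = 1. -/
/-- The `i`-th autocorrelation bit `b_i` of a word `w` (for `1 ≤ i ≤ w.length`):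
`1` if the prefix of `w` of length `i` equals the suffix of `w` of length `i`, else `0`. -/
def acorrBit {α : Type*} [DecidableEq α] (w : List α) (i : ℕ) : ℕ :=
  if w.take i = w.drop (w.length - i) then 1 else 0

/-- The inverse autocorrelation polynomial `A_w(x) = ∑_{i=1}^k b_i x^(i-1)`, over `ℝ`. -/
noncomputable def APolyR {α : Type*} [DecidableEq α] (w : List α) : Polynomial ℝ :=
  ∑ i ∈ Finset.range w.length, Polynomial.C (acorrBit w (i + 1) : ℝ) * Polynomial.X ^ i

/-- The inverse autocorrelation polynomial `A_w(x)`, over `ℂ`. -/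
noncomputable def APolyC {α : Type*} [DecidableEq α] (w : List α) : Polynomial ℂ :=
  ∑ i ∈ Finset.range w.length, Polynomial.C (acorrBit w (i + 1) : ℂ) * Polynomial.X ^ i

/-- The recurrence polynomial `P_w(x) = 1 + (x - q)·A_w(x)`, over `ℝ`. -/
noncomputable def PPolyR (q : ℕ) {α : Type*} [DecidableEq α] (w : List α) : Polynomial ℝ :=
  1 + (Polynomial.X - Polynomial.C (q : ℝ)) * APolyR w

/-- The recurrence polynomial `P_w(x) = 1 + (x - q)·A_w(x)`, over `ℂ`. -/
noncomputable def PPolyC (q : ℕ) {α : Type*} [DecidableEq α] (w : List α) : Polynomial ℂ :=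
  1 + (Polynomial.X - Polynomial.C (q : ℂ)) * APolyC w

/-- `h_w(n)`: the number of words of length `n` over `Fin q` whose last `w.length` letters
equal `w` and which contain no other occurrence of `w` as consecutive letters. -/
noncomputable def hitCount (q : ℕ) (w : List (Fin q)) (n : ℕ) : ℕ :=
  Nat.card {l : List (Fin q) // l.length = n ∧ l.drop (n - w.length) = w ∧
    ∀ p < n - w.length, (l.drop p).take w.length ≠ w}

/-- The first hitting probability `P_h(w,n) = h_w(n+k)/q^(n+k)` where `k = w.length`. -/
noncomputable def hitProb (q : ℕ) (w : List (Fin q)) (n : ℕ) : ℝ :=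
  (hitCount q w (n + w.length) : ℝ) / (q : ℝ) ^ (n + w.length)

/-- The constant `C_{w/w'} = ln(1+r)/r` with `r = (A_w(q) − A_{w'}(q))/A_{w'}(q)`. -/
noncomputable def Crat (q : ℕ) (w w' : List (Fin q)) : ℝ :=
  Real.log (1 + ((APolyR w).eval (q : ℝ) - (APolyR w').eval (q : ℝ)) / (APolyR w').eval (q : ℝ)) /
    (((APolyR w).eval (q : ℝ) - (APolyR w').eval (q : ℝ)) / (APolyR w').eval (q : ℝ))

/-- The partial-fraction coefficient `c_w = 1/P_w'(α_m)`. -/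
noncomputable def cwCoef (q : ℕ) (w : List (Fin q)) (αm : ℝ) : ℝ :=
  1 / ((PPolyR q w).derivative.eval αm)


/-!
`b_i = 1` exactly when `k - i` is a period of `w`, so `p = k - i_m` is the least positive
period. By the Fine–Wilf periodicity lemma, any period `q ≤ i_m` (so that `p + q ≤ k`) gives a
period `gcd p q ≤ p`, hence `gcd p q = p` and `p ∣ q`: this is (a). Conversely multiples of a
period are periods, which is (b).
-/

namespace List

variable {α : Type*}

theorem take_eq_drop_iff_hasPeriod (w : List α) {i : ℕ} (hi : i ≤ w.length) :
    w.take i = w.drop (w.length - i) ↔ w.HasPeriod (w.length - i) := by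
  rw [hasPeriod_iff_getElem?]
  constructor
  · intro h j hj
    have := congrArg (·[j]?) h
    simp only [getElem?_take, getElem?_drop] at this
    rwa [if_pos (by omega), Nat.add_comm] at this
  · intro hp
    refine ext_getElem? fun j => ?_
    rw [getElem?_take, getElem?_drop]
    split_ifs with hj
    · rw [Nat.add_comm]
      exact hp j (by omega)
    · exact (getElem?_eq_none (by omega)).symm

variable {w : List α} {p q : ℕ}

theorem HasPeriod.mul (hp : w.HasPeriod p) (m : ℕ) : w.HasPeriod (m * p) := by
  rw [hasPeriod_iff_forall_getElem?_mod] at hp ⊢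
  intro i hi
  rw [hp i hi, hp (i % (m * p)) ((Nat.mod_le i _).trans_lt hi),
    Nat.mod_mod_of_dvd i (dvd_mul_left p m)]

theorem dvd_of_isLeast_hasPeriod (hp : IsLeast {r | 0 < r ∧ w.HasPeriod r} p)
    (hq : w.HasPeriod q) (hlen : p + q - p.gcd q ≤ w.length) : p ∣ q := by
  obtain ⟨⟨hp0, hper⟩, hmin⟩ := hp
  have hg : p.gcd q = p :=
    le_antisymm (Nat.gcd_le_left q hp0) (hmin ⟨Nat.gcd_pos_of_pos_left q hp0, hper.gcd hq hlen⟩)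
  exact hg ▸ Nat.gcd_dvd_right p q

end List

theorem acorrBit_eq_one_iff {α : Type*} [DecidableEq α] (w : List α) {i : ℕ}
    (hi : i ≤ w.length) : acorrBit w i = 1 ↔ w.HasPeriod (w.length - i) := by
  rw [acorrBit, ← w.take_eq_drop_iff_hasPeriod hi]
  split_ifs <;> simp_all

/-- Structure of autocorrelations: if `w` has length `k`, some index
`1 ≤ i ≤ k−1` has `b_i = 1`, and `i_m` is the largest such index, then (a) every
`1 ≤ i ≤ k−1` with `b_i = 1` satisfies `i < k − i_m` or `i = k − m·(k − i_m)` for some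
positive integer `m`; and (b) conversely every `1 ≤ i ≤ k−1` of the form
`i = k − m·(k − i_m)` with `m` a positive integer has `b_i = 1`. -/
theorem stmt16 {α : Type*} [DecidableEq α] (k : ℕ) (w : List α) (hwlen : w.length = k)
    (im : ℕ) (him1 : 1 ≤ im) (him2 : im ≤ k - 1) (himb : acorrBit w im = 1)
    (himmax : ∀ i : ℕ, 1 ≤ i → i ≤ k - 1 → acorrBit w i = 1 → i ≤ im) :
    (∀ i : ℕ, 1 ≤ i → i ≤ k - 1 → acorrBit w i = 1 →
      i < k - im ∨ ∃ m : ℕ, 0 < m ∧ (i : ℤ) = (k : ℤ) - m * ((k : ℤ) - im)) ∧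
    (∀ i : ℕ, 1 ≤ i → i ≤ k - 1 →
      (∃ m : ℕ, 0 < m ∧ (i : ℤ) = (k : ℤ) - m * ((k : ℤ) - im)) → acorrBit w i = 1) := by
  subst hwlen
  have hp : w.HasPeriod (w.length - im) := (acorrBit_eq_one_iff w (i := im) (by omega)).1 himb
  have hleast : IsLeast {r | 0 < r ∧ w.HasPeriod r} (w.length - im) := by
    refine ⟨⟨by omega, hp⟩, fun r ⟨hr0, hr⟩ => ?_⟩
    by_cases hrlen : r < w.length
    · have := himmax (w.length - r) (by omega) (by omega)
        ((acorrBit_eq_one_iff w (by omega)).2 (by rwa [Nat.sub_sub_self hrlen.le]))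
      omega
    · omega
  refine ⟨fun i hi1 hi2 hb => ?_, fun i hi1 hi2 ⟨m, hm, hi⟩ => ?_⟩
  · refine or_iff_not_imp_left.2 fun hlarge => ?_
    have hq : w.HasPeriod (w.length - i) := (acorrBit_eq_one_iff w (i := i) (by omega)).1 hb
    obtain ⟨m, hm⟩ := List.dvd_of_isLeast_hasPeriod hleast hq (by omega)
    refine ⟨m, Nat.pos_of_ne_zero (by rintro rfl; omega), ?_⟩
    zify [show i ≤ w.length by omega, show im ≤ w.length by omega] at hm
    linarith
  · have hmul : w.length - i = m * (w.length - im) := by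
      zify [show i ≤ w.length by omega, show im ≤ w.length by omega]
      linarith
    exact (acorrBit_eq_one_iff w (i := i) (by omega)).2 (hmul ▸ hp.mul m)
end

section
/- Let q ≥ 2 and let w, w' be two words of the same length k over an alphabet of q letters with autocorrelations b and b' respectively. Suppose there exists 1 ≤ i ≤ k−1 with b_i = 1, let i_m = max{ i : b_i = 1, 1 ≤ i ≤ k−1 }, and suppose i_m > 2k/3 + 1 and every index 1 ≤ i ≤ k−1 with b'_i = 1 satisfies i < i_m. Then A_w(q) − A_{w'}(q) ≥ q^{2k/3 − 1}. -/
def PerL {α : Type*} (l : List α) (p : ℕ) : Prop :=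
  ∀ i, i + p < l.length → l[i]? = l[i+p]?

lemma perL_add {α : Type*} {l : List α} {p q : ℕ} (hp : PerL l p) (hq : PerL l q) :
    PerL l (p + q) := by
  intro i hi
  rw [show i + (p+q) = (i+p)+q by omega]
  rw [hp i (by omega), hq (i+p) (by omega)]

lemma perL_sub {α : Type*} {l : List α} {p q : ℕ} (hpq : p ≤ q) (hk : p + q ≤ l.length)
    (hp : PerL l p) (hq : PerL l q) : PerL l (q - p) := by
  intro i hi
  by_cases h : i + q < l.length
  · have h1 := hq i h
    have h2 := hp (i + (q-p)) (by omega)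
    rw [show i + (q-p) + p = i + q by omega] at h2
    rw [h1, ← h2]
  · have h1 := hp (i-p) (by omega)
    rw [show i - p + p = i by omega] at h1
    have h2 := hq (i-p) (by omega)
    rw [show i - p + q = i + (q-p) by omega] at h2
    rw [← h1, h2]

lemma border_iff_perL {α : Type*} {l : List α} {i : ℕ} (hik : i ≤ l.length) :
    l.take i = l.drop (l.length - i) ↔ PerL l (l.length - i) := by
  constructor
  · intro h j hj
    have hj' : j < i := by omega
    have := congrArg (fun t => t[j]?) h
    simp only [List.getElem?_take, List.getElem?_drop, if_pos hj'] at this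
    rw [this, show l.length - i + j = j + (l.length - i) by omega]
  · intro h
    apply List.ext_getElem?
    intro j
    by_cases hj : j < i
    · rw [List.getElem?_take, if_pos hj, List.getElem?_drop,
        show l.length - i + j = j + (l.length - i) by omega]
      exact h j (by omega)
    · rw [List.getElem?_take, if_neg hj, List.getElem?_eq_none]
      simp; omega

lemma acorrBit_eq_one_iff_perL {α : Type*} [DecidableEq α] {w : List α} {i : ℕ}
    (hik : i ≤ w.length) : acorrBit w i = 1 ↔ PerL w (w.length - i) := by
  rw [acorrBit, ← border_iff_perL hik]
  split <;> simp_all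

lemma acorrBit_self {α : Type*} [DecidableEq α] (w : List α) : acorrBit w w.length = 1 := by
  simp [acorrBit]

lemma eval_APolyR {α : Type*} [DecidableEq α] (w : List α) (x : ℝ) :
    (APolyR w).eval x = ∑ i ∈ Finset.range w.length, (acorrBit w (i+1) : ℝ) * x ^ i := by
  simp [APolyR, Polynomial.eval_finset_sum]

lemma geom_le' {x : ℝ} (hx : 2 ≤ x) (m : ℕ) :
    ∑ i ∈ Finset.range m, x^i ≤ x^m - 1 := by
  induction m with
  | zero => simp
  | succ n ih =>
    rw [Finset.sum_range_succ, pow_succ]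
    have h0 : (0:ℝ) ≤ x^n := by positivity
    nlinarith

lemma sum_bound {x : ℝ} (hx : 2 ≤ x) {n m : ℕ} (f : ℕ → ℝ) (hm : m ≤ n)
    (hf : ∀ i ∈ Finset.range n, f i ≤ if i < m then x^i else 0) :
    ∑ i ∈ Finset.range n, f i ≤ x^m - 1 := by
  calc ∑ i ∈ Finset.range n, f i
      ≤ ∑ i ∈ Finset.range n, (if i < m then x^i else 0) := Finset.sum_le_sum hf
    _ = ∑ i ∈ Finset.range m, (if i < m then x^i else 0) :=
        (Finset.sum_subset (Finset.range_subset_range.mpr hm)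
          (fun i _ hi => by rw [if_neg (by simpa using hi)])).symm
    _ = ∑ i ∈ Finset.range m, x^i :=
        Finset.sum_congr rfl (fun i hi => by rw [if_pos (Finset.mem_range.mp hi)])
    _ ≤ x^m - 1 := geom_le' hx m

/-- Let `w, w'` be words of the same length `k` over `Fin q`, `q ≥ 2`.
If `i_m`, the largest index `1 ≤ i ≤ k−1` with `b_i = 1`, satisfies `i_m > 2k/3 + 1` and
every index `1 ≤ i ≤ k−1` with `b'_i = 1` satisfies `i < i_m`, then
`A_w(q) − A_{w'}(q) ≥ q^(2k/3 − 1)`. -/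
theorem stmt17 (q k : ℕ) (hq : 2 ≤ q) (w w' : List (Fin q))
    (hwlen : w.length = k) (hw'len : w'.length = k)
    (im : ℕ) (him1 : 1 ≤ im) (him2 : im ≤ k - 1) (himb : acorrBit w im = 1)
    (himmax : ∀ i : ℕ, 1 ≤ i → i ≤ k - 1 → acorrBit w i = 1 → i ≤ im)
    (hbig : 2 * (k : ℝ) / 3 + 1 < (im : ℝ))
    (hsmall : ∀ i : ℕ, 1 ≤ i → i ≤ k - 1 → acorrBit w' i = 1 → i < im) :
    (q : ℝ) ^ (2 * (k : ℝ) / 3 - 1) ≤ (APolyR w).eval (q : ℝ) - (APolyR w').eval (q : ℝ) := by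
  have hq1 : (1:ℝ) ≤ (q:ℝ) := by exact_mod_cast Nat.one_le_of_lt hq
  have hq2 : (2:ℝ) ≤ (q:ℝ) := by exact_mod_cast hq
  have h3im : 2 * k + 4 ≤ 3 * im := by
    have h1 : (2 * k + 3 : ℝ) < 3 * im := by push_cast; linarith
    have h2 : 2 * k + 3 < 3 * im := by exact_mod_cast h1
    omega
  have hk7 : 7 ≤ k := by omega
  set p : ℕ := k - im with hp
  have hp1 : 1 ≤ p := by omega
  have h3p : 3 * p + 4 ≤ k := by omega
  -- w has period p, hence 2p, hence border im - p = k - 2p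
  have hPw : PerL w p := by
    have h := (acorrBit_eq_one_iff_perL (w := w) (i := im) (by omega)).mp himb
    rw [hwlen] at h; exact h
  have hPw2 : PerL w (2 * p) := by
    have h := perL_add hPw hPw; rwa [show p + p = 2*p by omega] at h
  have hb2 : acorrBit w (im - p) = 1 := by
    rw [acorrBit_eq_one_iff_perL (by omega), hwlen, show k - (im - p) = 2 * p by omega]
    exact hPw2
  -- lower bound for A_w
  have hAw : (q:ℝ)^(k-1) + (q:ℝ)^(im-1) + (q:ℝ)^(im-p-1) ≤ (APolyR w).eval (q:ℝ) := by
    rw [eval_APolyR, hwlen]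
    have hsub : ({k-1, im-1, im-p-1} : Finset ℕ) ⊆ Finset.range k := by
      intro x hx; simp at hx; rcases hx with h|h|h <;> (subst h; simp; omega)
    calc (q:ℝ)^(k-1) + (q:ℝ)^(im-1) + (q:ℝ)^(im-p-1)
        = ∑ i ∈ ({k-1, im-1, im-p-1} : Finset ℕ), (acorrBit w (i+1) : ℝ) * (q:ℝ)^i := by
          rw [Finset.sum_insert (by simp; omega), Finset.sum_insert (by simp; omega),
            Finset.sum_singleton]
          rw [show k - 1 + 1 = k by omega, show im - 1 + 1 = im by omega,
            show im - p - 1 + 1 = im - p by omega, ← hwlen, acorrBit_self, hwlen, himb, hb2]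
          push_cast; ring
      _ ≤ _ := by
          apply Finset.sum_le_sum_of_subset_of_nonneg hsub
          intro i _ _; positivity
  -- upper bound for A_w'
  have hbit01 : ∀ i, acorrBit w' i = 0 ∨ acorrBit w' i = 1 := by
    intro i; rw [acorrBit]; split <;> simp
  have hbk : acorrBit w' k = 1 := hw'len ▸ acorrBit_self w'
  have hAw' : (APolyR w').eval (q:ℝ)
      ≤ (q:ℝ)^(k-1) + ((q:ℝ)^(im-2) + ((q:ℝ)^(im-p-2) - 1)) := by
    rw [eval_APolyR, hw'len, show k = (k-1)+1 by omega, Finset.sum_range_succ,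
      show (k-1)+1 = k by omega, hbk]
    push_cast
    have main : ∑ i ∈ Finset.range (k-1), (acorrBit w' (i+1) : ℝ) * (q:ℝ)^i
        ≤ (q:ℝ)^(im-2) + ((q:ℝ)^(im-p-2) - 1) := by
      by_cases hB : acorrBit w' (im-1) = 1
      · -- largest border of w' is exactly im-1; second-largest ≤ im-p-2
        have hP2 : PerL w' (p+1) := by
          have h := (acorrBit_eq_one_iff_perL (w := w') (i := im-1) (by omega)).mp hB
          rwa [hw'len, show k - (im-1) = p+1 by omega] at h
        have dich : ∀ j, 1 ≤ j → j ≤ k-1 → acorrBit w' j = 1 → j = im-1 ∨ j ≤ im-p-2 := by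
          intro j hj1 hj2 hbj
          by_contra hcon
          push_neg at hcon
          obtain ⟨hne, hgt⟩ := hcon
          have hlt : j < im := hsmall j hj1 hj2 hbj
          -- so im-p-1 ≤ j ≤ im-2
          have hP1 : PerL w' (k - j) := by
            have h := (acorrBit_eq_one_iff_perL (w := w') (i := j) (by omega)).mp hbj
            rwa [hw'len] at h
          have hsub' := perL_sub (p := p+1) (q := k - j) (by omega)
            (by rw [hw'len]; omega) hP2 hP1
          have hnew : acorrBit w' (j+p+1) = 1 := by
            rw [acorrBit_eq_one_iff_perL (by omega), hw'len,
              show k - (j+p+1) = k - j - (p+1) by omega]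
            exact hsub'
          have := hsmall (j+p+1) (by omega) (by omega) hnew
          omega
        have key : ∀ i ∈ Finset.range (k-1), (acorrBit w' (i+1) : ℝ) * (q:ℝ)^i
            ≤ (if i = im-2 then (q:ℝ)^i else 0) + (if i < im-p-2 then (q:ℝ)^i else 0) := by
          intro i hi
          simp only [Finset.mem_range] at hi
          have hg1 : (0:ℝ) ≤ (if i = im-2 then (q:ℝ)^i else 0) := by positivity
          have hg2 : (0:ℝ) ≤ (if i < im-p-2 then (q:ℝ)^i else 0) := by positivity
          rcases hbit01 (i+1) with h0 | h1
          · rw [h0]; push_cast; linarith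
          · rcases dich (i+1) (by omega) (by omega) h1 with hcase | hcase
            · have : i = im-2 := by omega
              rw [h1, if_pos this]; push_cast; linarith
            · have : i < im-p-2 := by omega
              rw [h1, if_pos this]; push_cast; linarith
        calc ∑ i ∈ Finset.range (k-1), (acorrBit w' (i+1) : ℝ) * (q:ℝ)^i
            ≤ ∑ i ∈ Finset.range (k-1),
                ((if i = im-2 then (q:ℝ)^i else 0) + (if i < im-p-2 then (q:ℝ)^i else 0)) :=
              Finset.sum_le_sum key
          _ = (∑ i ∈ Finset.range (k-1), (if i = im-2 then (q:ℝ)^i else 0))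
              + ∑ i ∈ Finset.range (k-1), (if i < im-p-2 then (q:ℝ)^i else 0) :=
              Finset.sum_add_distrib
          _ ≤ (q:ℝ)^(im-2) + ((q:ℝ)^(im-p-2) - 1) := by
              gcongr
              · rw [Finset.sum_ite_eq' (Finset.range (k-1)) (im-2) (fun i => (q:ℝ)^i),
                  if_pos (by simp; omega)]
              · exact sum_bound hq2 _ (by omega) (fun i _ => le_refl _)
      · -- no border at im-1: all borders ≤ im-2
        have key : ∀ i ∈ Finset.range (k-1), (acorrBit w' (i+1) : ℝ) * (q:ℝ)^i
            ≤ (if i < im-2 then (q:ℝ)^i else 0) := by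
          intro i hi
          simp only [Finset.mem_range] at hi
          have hg1 : (0:ℝ) ≤ (if i < im-2 then (q:ℝ)^i else 0) := by positivity
          rcases hbit01 (i+1) with h0 | h1
          · rw [h0]; push_cast; linarith
          · have hlt : i + 1 < im := hsmall (i+1) (by omega) (by omega) h1
            have hne : i + 1 ≠ im - 1 := fun hcon => hB (hcon ▸ h1)
            have : i < im - 2 := by omega
            rw [h1, if_pos this]; push_cast; linarith
        have h1 := sum_bound hq2 (fun i => (acorrBit w' (i+1) : ℝ) * (q:ℝ)^i) (by omega : im-2 ≤ k-1) key
        have h2 : (1:ℝ) ≤ (q:ℝ)^(im-p-2) := one_le_pow₀ hq1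
        linarith
    push_cast at main
    linarith
  -- final assembly
  have e1 : (q:ℝ)^(im-1) = (q:ℝ)^(im-2) * q := by
    rw [show im-1 = (im-2)+1 by omega, pow_succ]
  have e2 : (q:ℝ)^(im-p-1) = (q:ℝ)^(im-p-2) * q := by
    rw [show im-p-1 = (im-p-2)+1 by omega, pow_succ]
  have ha0 : (0:ℝ) ≤ (q:ℝ)^(im-2) := by positivity
  have hb0 : (0:ℝ) ≤ (q:ℝ)^(im-p-2) := by positivity
  have hrpow : (q:ℝ)^(2*(k:ℝ)/3 - 1) ≤ (q:ℝ)^(im-2) := by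
    rw [← Real.rpow_natCast (q:ℝ) (im-2)]
    apply Real.rpow_le_rpow_of_exponent_le hq1
    have : ((im-2 : ℕ) : ℝ) = (im:ℝ) - 2 := by
      rw [Nat.cast_sub (by omega)]; norm_num
    rw [this]; linarith
  nlinarith [mul_nonneg ha0 (by linarith : (0:ℝ) ≤ (q:ℝ) - 2),
    mul_nonneg hb0 (by linarith : (0:ℝ) ≤ (q:ℝ) - 1)]
end
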